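/- For every prime p and natural number n ≥ p, B_{n−p} ≡ V_n (mod p), where B denotes the Bell numbers and V_n is the number of partitions of an n-element set into blocks all of size at least 2. -/

import Mathlib

open Finset Polynomial

/-- Stirling numbers of the second kind. -/
def S2 : ℕ → ℕ → ℕ
  | 0, 0 => 1
  | 0, _ + 1 => 0
  | _ + 1, 0 => 0
  | n + 1, k + 1 => (k + 1) * S2 n (k + 1) + S2 n k

/-- Bell numbers. -/
def bell (n : ℕ) : ℕ := ∑ k ∈ Finset.range (n + 1), S2 n k

/-- r-Stirling numbers of the second kind. -/
def rS2 (r : ℕ) : ℕ → ℕ → ℕ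
  | 0, 0 => 1
  | 0, _ + 1 => 0
  | n + 1, 0 => r * rS2 r n 0
  | n + 1, k + 1 => rS2 r n k + (k + 1 + r) * rS2 r n (k + 1)

/-- Unsigned r-Stirling numbers of the first kind. -/
def rS1 (r : ℕ) : ℕ → ℕ → ℕ
  | 0, 0 => 1
  | 0, _ + 1 => 0
  | n + 1, 0 => (r + n) * rS1 r n 0
  | n + 1, k + 1 => rS1 r n k + (r + n) * rS1 r n (k + 1)

/-- r-Bell numbers for integer r. -/
def rBell (n : ℕ) (r : ℤ) : ℤ :=
  ∑ j ∈ Finset.range (n + 1), (n.choose j : ℤ) * r ^ (n - j) * (bell j : ℤ)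

/-- r-Bell numbers for natural r, via r-Stirling numbers. -/
def rBellNat (n r : ℕ) : ℕ := ∑ k ∈ Finset.range (n + 1), rS2 r n k

lemma S2_eq_zero_of_lt : ∀ {n k : ℕ}, n < k → S2 n k = 0 := by
  intro n
  induction n with
  | zero => intro k h; match k, h with | k + 1, _ => rfl
  | succ n ih =>
    intro k h
    match k, h with
    | k + 1, h =>
      show (k + 1) * S2 n (k + 1) + S2 n k = 0
      rw [ih (by omega), ih (by omega)]
      ring

lemma S2_succ_succ (n k : ℕ) :
    S2 (n + 1) (k + 1) = ∑ j ∈ range (n + 1), n.choose j * S2 j k := by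
  induction n generalizing k with
  | zero => simp [S2]
  | succ n ih =>
    have peel : ∑ j ∈ range (n + 2), (n + 1).choose j * S2 j k
        = (∑ j ∈ range (n + 1), (n + 1).choose (j + 1) * S2 (j + 1) k)
          + (n + 1).choose 0 * S2 0 k := Finset.sum_range_succ' _ _
    have pascal : ∀ j, (n + 1).choose (j + 1) = n.choose j + n.choose (j + 1) :=
      fun j => Nat.choose_succ_succ n j
    have first : ∑ j ∈ range (n + 1), n.choose j * S2 (j + 1) k
        = k * S2 (n + 1) (k + 1) + S2 (n + 1) k := by
      match k with
      | 0 =>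
        have : ∀ j, S2 (j + 1) 0 = 0 := fun j => rfl
        simp [this, S2]
      | k' + 1 =>
        have hdef : ∀ j, S2 (j + 1) (k' + 1) = (k' + 1) * S2 j (k' + 1) + S2 j k' := fun j => rfl
        simp only [hdef, Nat.mul_add, Finset.sum_add_distrib]
        rw [← ih k']
        have hfac : ∑ x ∈ range (n + 1), n.choose x * ((k' + 1) * S2 x (k' + 1))
            = (k' + 1) * ∑ x ∈ range (n + 1), n.choose x * S2 x (k' + 1) := by
          rw [Finset.mul_sum]; exact Finset.sum_congr rfl fun _ _ => by ring
        rw [hfac, ← ih (k' + 1)]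
        rfl
    have second : (∑ j ∈ range (n + 1), n.choose (j + 1) * S2 (j + 1) k)
        + n.choose 0 * S2 0 k = S2 (n + 1) (k + 1) := by
      rw [← Finset.sum_range_succ' (fun j => n.choose j * S2 j k) (n + 1)]
      rw [Finset.sum_range_succ]
      rw [Nat.choose_succ_self, zero_mul, add_zero]
      exact (ih k).symm
    calc S2 (n + 2) (k + 1) = (k + 1) * S2 (n + 1) (k + 1) + S2 (n + 1) k := rfl
      _ = (k * S2 (n + 1) (k + 1) + S2 (n + 1) k) + S2 (n + 1) (k + 1) := by ring
      _ = (∑ j ∈ range (n + 1), n.choose j * S2 (j + 1) k)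
          + ((∑ j ∈ range (n + 1), n.choose (j + 1) * S2 (j + 1) k) + n.choose 0 * S2 0 k) := by
            rw [first, second]
      _ = ∑ j ∈ range (n + 2), (n + 1).choose j * S2 j k := by
            rw [peel]
            simp only [pascal, Nat.add_mul, Finset.sum_add_distrib, Nat.choose_zero_right]
            ring

lemma bell_succ (n : ℕ) : bell (n + 1) = ∑ k ∈ range (n + 1), n.choose k * bell k := by
  unfold bell
  rw [Finset.sum_range_succ' (fun k => S2 (n + 1) k) (n + 1)]
  have h0 : S2 (n + 1) 0 = 0 := rfl
  rw [h0, add_zero]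
  simp only [S2_succ_succ]
  rw [Finset.sum_comm]
  refine Finset.sum_congr rfl fun j hj => ?_
  rw [← Finset.mul_sum]
  congr 1
  rw [Finset.mem_range] at hj
  symm
  apply Finset.sum_subset
  · exact Finset.range_subset_range.mpr (by omega)
  · intro k _ hk
    rw [Finset.mem_range, not_lt] at hk
    exact S2_eq_zero_of_lt (by omega)

section Touchard

variable (p : ℕ) [hp : Fact p.Prime]

/-- The Bell umbral functional: `X ^ n ↦ bell n`, extended linearly. -/
noncomputable def LB : Polynomial (ZMod p) →ₗ[ZMod p] ZMod p where
  toFun f := f.sum fun k a => a * (bell k : ZMod p)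
  map_add' f g := Polynomial.sum_add_index f g _ (fun _ => zero_mul _) (fun _ _ _ => add_mul _ _ _)
  map_smul' c f := by
    show (c • f).sum (fun k a => a * (bell k : ZMod p))
      = RingHom.id (ZMod p) c • f.sum fun k a => a * (bell k : ZMod p)
    rw [RingHom.id_apply, smul_eq_mul,
      Polynomial.sum_smul_index f c (fun k a => a * (bell k : ZMod p)) (fun i => zero_mul _),
      Polynomial.sum_def, Polynomial.sum_def, Finset.mul_sum]
    exact Finset.sum_congr rfl fun k _ => by ring

lemma LB_monomial (n : ℕ) (a : ZMod p) : LB p (monomial n a) = a * bell n := by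
  show (monomial n a).sum (fun k a => a * (bell k : ZMod p)) = a * bell n
  exact Polynomial.sum_monomial_index a _ (zero_mul _)

lemma LB_X_pow (n : ℕ) : LB p (X ^ n) = bell n := by
  rw [X_pow_eq_monomial, LB_monomial, one_mul]

lemma LB_C_mul (a : ZMod p) (f : Polynomial (ZMod p)) : LB p (C a * f) = a * LB p f := by
  rw [← smul_eq_C_mul, map_smul, smul_eq_mul]

lemma LB_add_pow_one (n : ℕ) : LB p ((X + 1) ^ n) = bell (n + 1) := by
  have h : ((X + 1 : Polynomial (ZMod p))) ^ n
      = ∑ k ∈ range (n + 1), C ((n.choose k : ZMod p)) * X ^ k := by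
    rw [add_pow]
    refine Finset.sum_congr rfl fun k _ => ?_
    rw [one_pow, mul_one, mul_comm, ← map_natCast (C : ZMod p →+* Polynomial (ZMod p))]
  rw [h, map_sum, bell_succ]
  push_cast
  exact Finset.sum_congr rfl fun k _ => by rw [LB_C_mul, LB_X_pow]

lemma LB_X_mul (f : Polynomial (ZMod p)) : LB p (X * f) = LB p (f.comp (X + 1)) := by
  induction f using Polynomial.induction_on' with
  | add f g hf hg => rw [mul_add, map_add, hf, hg, add_comp, map_add]
  | monomial n a =>
    rw [X_mul_monomial, LB_monomial]
    have hc : (monomial n a : Polynomial (ZMod p)).comp (X + 1) = C a * (X + 1) ^ n := by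
      rw [← C_mul_X_pow_eq_monomial, mul_comp, C_comp, pow_comp, X_comp]
    rw [hc, LB_C_mul, LB_add_pow_one]

lemma LB_prod (k : ℕ) (f : Polynomial (ZMod p)) :
    LB p ((∏ i ∈ range k, (X - C (i : ZMod p))) * f)
      = LB p (f.comp (X + C ((k : ℕ) : ZMod p))) := by
  induction k generalizing f with
  | zero => simp
  | succ k ih =>
    rw [Finset.prod_range_succ']
    have hg0 : (X - C (((0 : ℕ) : ZMod p))) = (X : Polynomial (ZMod p)) := by simp
    rw [hg0, mul_comm _ X, mul_assoc, LB_X_mul, mul_comp]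
    have hshift : (∏ i ∈ range k, (X - C (((i + 1 : ℕ) : ZMod p)))).comp (X + 1)
        = ∏ i ∈ range k, (X - C ((i : ZMod p))) := by
      rw [Polynomial.prod_comp]
      refine Finset.prod_congr rfl fun i _ => ?_
      rw [sub_comp, X_comp, C_comp]
      push_cast
      rw [C_add, C_1]
      ring
    rw [hshift, ih]
    congr 1
    rw [comp_assoc]
    congr 1
    rw [add_comp, X_comp, one_comp]
    push_cast
    rw [C_add, C_1]
    ring

lemma prod_range_eq_X_pow_sub_X :
    ∏ i ∈ range p, (X - C ((i : ZMod p))) = X ^ p - X := by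
  haveI : NeZero p := ⟨hp.out.ne_zero⟩
  have hmono : (X ^ p - X : Polynomial (ZMod p)).Monic := by
    apply (monic_X_pow p).sub_of_left
    rw [degree_X_pow, degree_X]
    exact_mod_cast hp.out.one_lt
  have hsplit := GaloisField.splits_zmod_X_pow_sub_X p
  have hroots : (X ^ p - X : Polynomial (ZMod p)).roots = Finset.univ.val := by
    have := FiniteField.roots_X_pow_card_sub_X (ZMod p)
    rwa [ZMod.card] at this
  have h1 := hsplit.eq_prod_roots_of_monic hmono
  rw [hroots] at h1
  rw [h1]
  have h2 : (Finset.univ.val.map fun a : ZMod p => X - C a).prod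
      = ∏ a : ZMod p, (X - C a) := rfl
  rw [h2]
  refine Finset.prod_bij' (fun (i : ℕ) _ => (i : ZMod p)) (fun b _ => b.val) ?_ ?_ ?_ ?_ ?_
  · intro a _; exact Finset.mem_univ _
  · intro b _; exact Finset.mem_range.mpr (ZMod.val_lt b)
  · intro a ha; exact ZMod.val_cast_of_lt (Finset.mem_range.mp ha)
  · intro b _; exact ZMod.natCast_zmod_val b
  · intro a _; rfl

lemma LB_X_pow_mul (f : Polynomial (ZMod p)) :
    LB p (X ^ p * f) = LB p (X * f) + LB p f := by
  have key : (X : Polynomial (ZMod p)) ^ p * f = (X ^ p - X) * f + X * f := by ring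
  rw [key, map_add, ← prod_range_eq_X_pow_sub_X, LB_prod, ZMod.natCast_self, C_0, add_zero,
    comp_X]
  exact add_comm _ _

lemma touchard (i : ℕ) : ((bell (i + p) : ℕ) : ZMod p) = bell (i + 1) + bell i := by
  have h := LB_X_pow_mul p (X ^ i)
  rw [← pow_add, ← pow_succ'] at h
  rw [LB_X_pow, LB_X_pow, LB_X_pow] at h
  rw [add_comm i p]
  exact h

end Touchard

section Diff

variable (p : ℕ) [hp : Fact p.Prime]

/-- Forward difference operator on sequences in `ZMod p`. -/
def dd (f : ℕ → ZMod p) : ℕ → ZMod p := fun i => f (i + 1) - f i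

lemma dd_iter (m : ℕ) : ∀ (f : ℕ → ZMod p) (i : ℕ),
    (dd p)^[m] f i
      = ∑ j ∈ range (m + 1), (-1 : ZMod p) ^ (m + j) * (m.choose j) * f (i + j) := by
  induction m with
  | zero => intro f i; simp
  | succ m ih =>
    intro f i
    rw [Function.iterate_succ_apply']
    show (dd p)^[m] f (i + 1) - (dd p)^[m] f i = _
    rw [ih f (i + 1), ih f i]
    rw [Finset.sum_range_succ'
      (fun j => (-1 : ZMod p) ^ (m + 1 + j) * (((m + 1).choose j : ℕ) : ZMod p) * f (i + j))
      (m + 1)]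
    have hterm : ∀ j ∈ range (m + 1),
        (-1 : ZMod p) ^ (m + 1 + (j + 1)) * (((m + 1).choose (j + 1) : ℕ) : ZMod p) * f (i + (j + 1))
        = (-1 : ZMod p) ^ (m + j) * ((m.choose j : ℕ) : ZMod p) * f (i + 1 + j)
          + (-1 : ZMod p) ^ (m + j) * ((m.choose (j + 1) : ℕ) : ZMod p) * f (i + (j + 1)) := by
      intro j _
      have h2 : (m + 1).choose (j + 1) = m.choose j + m.choose (j + 1) := Nat.choose_succ_succ m j
      have h3 : i + 1 + j = i + (j + 1) := by omega
      rw [h2, h3]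
      push_cast
      have h1 : m + 1 + (j + 1) = (m + j) + 2 := by omega
      rw [h1, pow_add]
      ring
    rw [Finset.sum_congr rfl hterm, Finset.sum_add_distrib]
    have key : (∑ j ∈ range (m + 1),
          (-1 : ZMod p) ^ (m + j) * ((m.choose (j + 1) : ℕ) : ZMod p) * f (i + (j + 1)))
        + (-1 : ZMod p) ^ (m + 1 + 0) * (((m + 1).choose 0 : ℕ) : ZMod p) * f (i + 0)
        = -∑ j ∈ range (m + 1), (-1 : ZMod p) ^ (m + j) * ((m.choose j : ℕ) : ZMod p) * f (i + j) := by
      rw [Finset.sum_range_succ'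
        (fun j => (-1 : ZMod p) ^ (m + j) * ((m.choose j : ℕ) : ZMod p) * f (i + j)) m]
      rw [neg_add]
      congr 1
      · rw [Finset.sum_range_succ, Nat.choose_succ_self]
        push_cast
        rw [mul_zero, zero_mul, add_zero, ← Finset.sum_neg_distrib]
        refine Finset.sum_congr rfl fun j _ => ?_
        rw [show m + (j + 1) = (m + j) + 1 from rfl, pow_succ]
        ring
      · rw [Nat.choose_zero_right, Nat.choose_zero_right]
        push_cast
        rw [show m + 1 + 0 = (m + 0) + 1 from rfl, pow_succ]
        ring
    rw [add_assoc, key, ← sub_eq_add_neg]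

lemma dd_iter_shift (m : ℕ) : ∀ i : ℕ,
    (dd p)^[m] (fun j => ((bell (j + 1) : ℕ) : ZMod p)) i
      = ∑ k ∈ range (i + 1), ((i.choose k : ℕ) : ZMod p) * ((bell (m + k) : ℕ) : ZMod p) := by
  induction m with
  | zero =>
    intro i
    show ((bell (i + 1) : ℕ) : ZMod p) = _
    rw [bell_succ i]
    push_cast
    simp
  | succ m ih =>
    intro i
    rw [Function.iterate_succ_apply']
    show (dd p)^[m] _ (i + 1) - (dd p)^[m] _ i = _
    rw [ih (i + 1), ih i]
    rw [Finset.sum_range_succ'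
      (fun k => (((i + 1).choose k : ℕ) : ZMod p) * ((bell (m + k) : ℕ) : ZMod p)) (i + 1)]
    have hterm : ∀ k ∈ range (i + 1),
        (((i + 1).choose (k + 1) : ℕ) : ZMod p) * ((bell (m + (k + 1)) : ℕ) : ZMod p)
        = ((i.choose k : ℕ) : ZMod p) * ((bell (m + 1 + k) : ℕ) : ZMod p)
          + ((i.choose (k + 1) : ℕ) : ZMod p) * ((bell (m + (k + 1)) : ℕ) : ZMod p) := by
      intro k _
      have h2 : (i + 1).choose (k + 1) = i.choose k + i.choose (k + 1) := Nat.choose_succ_succ i k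
      have h3 : m + 1 + k = m + (k + 1) := by omega
      rw [h2, h3]
      push_cast
      ring
    rw [Finset.sum_congr rfl hterm, Finset.sum_add_distrib]
    have key : (∑ k ∈ range (i + 1),
          ((i.choose (k + 1) : ℕ) : ZMod p) * ((bell (m + (k + 1)) : ℕ) : ZMod p))
        + (((i + 1).choose 0 : ℕ) : ZMod p) * ((bell (m + 0) : ℕ) : ZMod p)
        = ∑ k ∈ range (i + 1), ((i.choose k : ℕ) : ZMod p) * ((bell (m + k) : ℕ) : ZMod p) := by
      rw [Finset.sum_range_succ'
        (fun k => ((i.choose k : ℕ) : ZMod p) * ((bell (m + k) : ℕ) : ZMod p)) i]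
      rw [Nat.choose_zero_right, Nat.choose_zero_right]
      congr 1
      rw [Finset.sum_range_succ, Nat.choose_succ_self]
      push_cast
      rw [zero_mul, add_zero]
    rw [add_assoc, key, add_sub_cancel_right]

end Diff

theorem backward_touchard (p : ℕ) (hp : p.Prime) (n : ℕ) (hn : p ≤ n) :
    (bell (n - p) : ℤ) ≡ rBell n (-1) [ZMOD p] := by
  haveI : Fact p.Prime := ⟨hp⟩
  haveI : NeZero p := ⟨hp.ne_zero⟩
  rw [← ZMod.intCast_eq_intCast_iff]
  have hp1 : (dd p)^[p] (fun m => ((bell m : ℕ) : ZMod p))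
      = fun i => ((bell (i + 1) : ℕ) : ZMod p) := by
    funext i
    rw [dd_iter]
    rw [Finset.sum_range_succ]
    have hmid : ∑ j ∈ range p,
        (-1 : ZMod p) ^ (p + j) * ((p.choose j : ℕ) : ZMod p) * ((bell (i + j) : ℕ) : ZMod p)
        = (-1 : ZMod p) ^ p * ((bell i : ℕ) : ZMod p) := by
      rw [Finset.sum_eq_single_of_mem 0 (Finset.mem_range.mpr hp.pos)]
      · simp
      · intro j hj hj0
        have hz : ((p.choose j : ℕ) : ZMod p) = 0 := by
          rw [ZMod.natCast_eq_zero_iff]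
          exact Nat.Prime.dvd_choose_self hp hj0 (Finset.mem_range.mp hj)
        rw [hz]
        ring
    rw [hmid]
    have hneg : (-1 : ZMod p) ^ p = -1 := neg_one_pow_char (ZMod p) p
    have hlast : (-1 : ZMod p) ^ (p + p) * ((p.choose p : ℕ) : ZMod p)
        * ((bell (i + p) : ℕ) : ZMod p) = ((bell (i + p) : ℕ) : ZMod p) := by
      rw [Nat.choose_self, pow_add, hneg]
      push_cast
      ring
    rw [hlast, hneg, touchard p i]
    ring
  have key1 : (dd p)^[n] (fun m => ((bell m : ℕ) : ZMod p)) 0 = ((bell (n - p) : ℕ) : ZMod p) := by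
    calc (dd p)^[n] (fun m => ((bell m : ℕ) : ZMod p)) 0
        = (dd p)^[(n - p) + p] (fun m => ((bell m : ℕ) : ZMod p)) 0 := by
          rw [Nat.sub_add_cancel hn]
      _ = (dd p)^[n - p] ((dd p)^[p] (fun m => ((bell m : ℕ) : ZMod p))) 0 := by
          rw [Function.iterate_add_apply]
      _ = (dd p)^[n - p] (fun j => ((bell (j + 1) : ℕ) : ZMod p)) 0 := by rw [hp1]
      _ = ∑ k ∈ range (0 + 1), (((0 : ℕ).choose k : ℕ) : ZMod p)
            * ((bell ((n - p) + k) : ℕ) : ZMod p) := dd_iter_shift p (n - p) 0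
      _ = ((bell (n - p) : ℕ) : ZMod p) := by simp
  have key2 : (dd p)^[n] (fun m => ((bell m : ℕ) : ZMod p)) 0
      = ((rBell n (-1) : ℤ) : ZMod p) := by
    rw [dd_iter]
    unfold rBell
    push_cast
    refine Finset.sum_congr rfl fun j hj => ?_
    have hj' : j ≤ n := by
      have := Finset.mem_range.mp hj
      omega
    have hsgn : (-1 : ZMod p) ^ (n + j) = (-1 : ZMod p) ^ (n - j) := by
      rw [show n + j = (n - j) + 2 * j by omega, pow_add, pow_mul]
      norm_num
    rw [hsgn, zero_add]
    ring
  rw [← key2, key1]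
  push_cast
  rfl
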